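/- If a Boolean function family (f_n)_{n∈ℕ} is non-uniformly polynomial-length reducible to a Boolean function family (g_n)_{n∈ℕ} and (g_n)_{n∈ℕ} belongs to PLIS, then (f_n)_{n∈ℕ} belongs to PLIS. -/

import Mathlib

/-!
Given `f b = g (h₁ b, …, hₘ b)` with each `hⱼ` computed by a program `Xⱼ` of length at most `l`
and `g` by a program `Y`, run `X₁, …, Xₘ, Y` one after another. The registers are renamed so that
each `Xⱼ` gets private auxiliary registers and leaves `hⱼ b` in a fresh auxiliary register from
which `Y` reads its `j`-th input, and every `halt` of an `Xⱼ` becomes a jump to the start of the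
next program. Inputs survive the blocks because `IS_br` never writes input registers. The result
computes `f` and has length at most `m l + |Y| ≤ q(n)² + p(q(n))`.
-/

/-- Boolean register names: `inp i` is input register `in:(i+1)`,
`aux i` is auxiliary register `aux:(i+1)`, `out` is the output register. -/
inductive Reg where
  | inp : ℕ → Reg
  | aux : ℕ → Reg
  | out : Reg
deriving DecidableEq

/-- Basic instructions: register reads/writes, and (for splitting instruction
sequences) `split p` and `reply p` for Boolean parameters `p`. -/
inductive BInstr where
  | get : Reg → BInstr
  | set : Reg → Bool → BInstr
  | split : ℕ → BInstr
  | reply : ℕ → BInstr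
deriving DecidableEq

/-- Primitive instructions. -/
inductive PInstr where
  | plain : BInstr → PInstr
  | pos : BInstr → PInstr
  | neg : BInstr → PInstr
  | jump : ℕ → PInstr
  | halt : PInstr
deriving DecidableEq

abbrev RegState := Reg → Bool

/-- State change caused by processing a basic instruction. -/
def BInstr.effect : BInstr → RegState → RegState
  | .set r b, s => Function.update s r b
  | _, s => s

/-- Reply produced by processing a basic instruction. -/
def BInstr.rpl : BInstr → RegState → Bool
  | .get r, s => s r
  | .set _ b, _ => b
  | _, _ => false

def BInstr.isSplitReply : BInstr → Bool
  | .split _ => true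
  | .reply _ => true
  | _ => false

/-- Single-thread execution of an instruction sequence on Boolean registers;
`none` means deadlock, `some s` means termination in register state `s`.
(`split`/`reply` instructions make no sense here and deadlock.) -/
def exec : List PInstr → RegState → Option RegState
  | [], _ => none
  | .plain a :: X, s =>
      if a.isSplitReply then none else exec X (a.effect s)
  | .pos a :: X, s =>
      if a.isSplitReply then none
      else if a.rpl s then exec X (a.effect s) else exec (X.drop 1) (a.effect s)
  | .neg a :: X, s =>
      if a.isSplitReply then none
      else if a.rpl s then exec (X.drop 1) (a.effect s) else exec X (a.effect s)
  | .jump 0 :: _, _ => none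
  | .jump (l+1) :: X, s => exec (X.drop l) s
  | .halt :: _, s => some s
termination_by X _ => X.length
decreasing_by all_goals (simp only [List.length_drop, List.length_cons]; omega)

/-- Initial register state: input registers `in:1 .. in:n` contain
`b 0, ..., b (n-1)`; all other registers contain `false`. -/
def initState (n : ℕ) (b : Fin n → Bool) : RegState := fun r =>
  match r with
  | .inp i => if h : i < n then b ⟨i, h⟩ else false
  | _ => false

/-- `X` computes the `n`-ary Boolean function `f`: for every input, execution
terminates (does not deadlock) with the output register containing `f b`. -/
def Computes {n : ℕ} (f : (Fin n → Bool) → Bool) (X : List PInstr) : Prop :=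
  ∀ b : Fin n → Bool, ∃ s : RegState,
    exec X (initState n b) = some s ∧ s Reg.out = f b

/-- Basic instructions allowed in `IS_br`. -/
def BrBasic : BInstr → Prop
  | .get (.inp _) => True
  | .get (.aux _) => True
  | .set (.aux _) _ => True
  | .set .out _ => True
  | _ => False

/-- Basic instructions allowed in `IS_br^na`. -/
def NaBasic : BInstr → Prop
  | .get (.inp _) => True
  | .set .out _ => True
  | _ => False

def InstrBasicOK (P : BInstr → Prop) : PInstr → Prop
  | .plain a => P a
  | .pos a => P a
  | .neg a => P a
  | _ => True

/-- Membership of `IS_br` (non-empty, only allowed basic instructions). -/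
def ISbr (X : List PInstr) : Prop :=
  X ≠ [] ∧ ∀ u ∈ X, InstrBasicOK BrBasic u

/-- Membership of `IS_br^na`. -/
def ISbrna (X : List PInstr) : Prop :=
  X ≠ [] ∧ ∀ u ∈ X, InstrBasicOK NaBasic u

/-- The primitive instruction contains the basic instruction `out.set:false`. -/
def UsesOutSetFalse : PInstr → Prop
  | .plain (.set .out false) => True
  | .pos (.set .out false) => True
  | .neg (.set .out false) => True
  | _ => False

/-- The class PLIS of Boolean function families computable by
polynomial-length instruction sequences from `IS_br`. -/
def PLIS (F : (n : ℕ) → (Fin n → Bool) → Bool) : Prop :=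
  ∃ h : Polynomial ℕ, ∀ n : ℕ, ∃ X : List PInstr,
    ISbr X ∧ Computes (F n) X ∧ X.length ≤ h.eval n

/-- `f` is length-`l` reducible to `g`. -/
def LengthRed (l : ℕ) {n m : ℕ} (f : (Fin n → Bool) → Bool)
    (g : (Fin m → Bool) → Bool) : Prop :=
  ∃ h : Fin m → (Fin n → Bool) → Bool,
    (∀ j : Fin m, ∃ X : List PInstr, ISbr X ∧ Computes (h j) X ∧ X.length ≤ l) ∧
    ∀ b : Fin n → Bool, f b = g (fun j => h j b)

/-- Non-uniform polynomial-length reducibility of Boolean function families. -/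
def PLRed (F G : (n : ℕ) → (Fin n → Bool) → Bool) : Prop :=
  ∃ q : Polynomial ℕ, ∀ n : ℕ, ∃ l m : ℕ,
    l ≤ q.eval n ∧ m ≤ q.eval n ∧ LengthRed l (F n) (G m)

lemma Function.extend_comp_self {α β γ : Type*} {f : α → β} (hf : f.Injective) (g : β → γ) :
    Function.extend f (g ∘ f) g = g := by
  funext b
  by_cases hb : ∃ a, f a = b
  · obtain ⟨a, rfl⟩ := hb
    exact hf.extend_apply _ _ a
  · exact Function.extend_apply' _ _ _ hb

namespace BInstr

def rename (ρ : Reg → Reg) : BInstr → BInstr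
  | .get r => .get (ρ r)
  | .set r b => .set (ρ r) b
  | a => a

@[simp] lemma isSplitReply_rename (ρ : Reg → Reg) (a : BInstr) :
    (a.rename ρ).isSplitReply = a.isSplitReply := by
  cases a <;> rfl

lemma rpl_rename (ρ : Reg → Reg) (a : BInstr) (s : RegState) :
    (a.rename ρ).rpl s = a.rpl (s ∘ ρ) := by
  cases a <;> rfl

lemma effect_rename_comp {ρ : Reg → Reg} (hρ : ρ.Injective) (a : BInstr) (s : RegState) :
    (a.rename ρ).effect s ∘ ρ = a.effect (s ∘ ρ) := by
  cases a with
  | set r b => exact Function.update_comp_eq_of_injective s hρ r b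
  | _ => rfl

lemma extend_effect_rename (ρ : Reg → Reg) (a : BInstr) (s t : RegState) :
    Function.extend ρ t ((a.rename ρ).effect s) = Function.extend ρ t s := by
  funext r
  by_cases hr : ∃ r', ρ r' = r
  · obtain ⟨r', rfl⟩ := hr
    simp only [Function.extend, dif_pos (⟨r', rfl⟩ : ∃ r'', ρ r'' = ρ r')]
  · rw [Function.extend_apply' _ _ _ hr, Function.extend_apply' _ _ _ hr]
    cases a with
    | set r' b => exact Function.update_of_ne (fun h => hr ⟨r', h.symm⟩) _ _
    | _ => rfl

end BInstr

lemma BrBasic.rename {ρ : Reg → Reg} (hget : ∀ r, BrBasic (.get r) → BrBasic (.get (ρ r)))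
    (hset : ∀ r b, BrBasic (.set r b) → BrBasic (.set (ρ r) b)) {a : BInstr}
    (ha : BrBasic a) : BrBasic (a.rename ρ) := by
  cases a with
  | get r => exact hget r ha
  | set r b => exact hset r b ha
  | _ => exact ha

namespace PInstr

def rename (ρ : Reg → Reg) : PInstr → PInstr
  | .plain a => .plain (a.rename ρ)
  | .pos a => .pos (a.rename ρ)
  | .neg a => .neg (a.rename ρ)
  | u => u

lemma instrBasicOK_rename {P : BInstr → Prop} {ρ : Reg → Reg} (hP : ∀ a, P a → P (a.rename ρ))
    {u : PInstr} (hu : InstrBasicOK P u) : InstrBasicOK P (u.rename ρ) := by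
  cases u with
  | plain a | pos a | neg a => exact hP a hu
  | _ => trivial

def haltToJump (k : ℕ) : PInstr → PInstr
  | .halt => .jump k
  | u => u

lemma instrBasicOK_haltToJump {P : BInstr → Prop} (k : ℕ) (u : PInstr) :
    InstrBasicOK P (u.haltToJump k) ↔ InstrBasicOK P u := by
  cases u <;> rfl

end PInstr

def haltsToJumps : List PInstr → List PInstr
  | [] => []
  | u :: X => u.haltToJump (X.length + 1) :: haltsToJumps X

@[simp] lemma length_haltsToJumps (X : List PInstr) : (haltsToJumps X).length = X.length := by
  induction X <;> simp [haltsToJumps, *]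

lemma drop_haltsToJumps_append {k : ℕ} {X : List PInstr} (hk : k ≤ X.length) (R : List PInstr) :
    (haltsToJumps X ++ R).drop k = haltsToJumps (X.drop k) ++ R := by
  induction X generalizing k with
  | nil => simp_all [haltsToJumps]
  | cons u X ih =>
    cases k with
    | zero => rfl
    | succ k => exact ih (by simpa using hk)

lemma instrBasicOK_of_mem_haltsToJumps {P : BInstr → Prop} {X : List PInstr}
    (hX : ∀ u ∈ X, InstrBasicOK P u) : ∀ u ∈ haltsToJumps X, InstrBasicOK P u := by
  induction X with
  | nil => simp [haltsToJumps]
  | cons v X ih =>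
    simp only [haltsToJumps, List.mem_cons, forall_eq_or_imp] at hX ⊢
    exact ⟨(PInstr.instrBasicOK_haltToJump _ _).2 hX.1, ih hX.2⟩

lemma le_length_of_exec_drop {X : List PInstr} {k : ℕ} {s t : RegState}
    (h : exec (X.drop k) s = some t) : k ≤ X.length := by
  by_contra hk
  rw [List.drop_eq_nil_of_le (by omega), exec] at h
  exact absurd h (by simp)

lemma exec_haltsToJumps_append {X : List PInstr} {s t : RegState} (h : exec X s = some t)
    (R : List PInstr) : exec (haltsToJumps X ++ R) s = exec R t := by
  induction X, s using exec.induct <;>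
    simp only [exec, haltsToJumps, PInstr.haltToJump, List.cons_append, *, reduceIte,
      Bool.false_eq_true] at h ⊢
  case case12 => rw [Option.some_inj.1 h, drop_haltsToJumps_append le_rfl, List.drop_length]; rfl
  all_goals first
    | cases h
    | (try rw [drop_haltsToJumps_append (le_length_of_exec_drop h)]); solve_by_elim

lemma exec_map_rename {ρ : Reg → Reg} (hρ : ρ.Injective) (X : List PInstr) (s : RegState) :
    exec (X.map (PInstr.rename ρ)) s = (exec X (s ∘ ρ)).map (Function.extend ρ · s) := by
  generalize hs : s ∘ ρ = s'
  induction X, s' using exec.induct generalizing s <;> subst hs <;>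
    simp only [exec, List.map_cons, PInstr.rename, BInstr.isSplitReply_rename, BInstr.rpl_rename,
      ← List.map_drop, List.map_nil, Option.map_none, Option.map_some, Function.extend_comp_self hρ,
      reduceIte, Bool.false_eq_true, *] at *
  all_goals
    rename_i ih
    simp only [ih _ (BInstr.effect_rename_comp hρ _ s), BInstr.extend_effect_rename]

lemma InstrBasicOK.mono {P Q : BInstr → Prop} (hPQ : ∀ a, P a → Q a) {u : PInstr}
    (hu : InstrBasicOK P u) : InstrBasicOK Q u := by
  cases u with
  | plain a | pos a | neg a => exact hPQ a hu
  | _ => trivial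

lemma exec_invariant {P : RegState → Prop} {X : List PInstr}
    (hX : ∀ u ∈ X, InstrBasicOK (fun a => ∀ s, P s → P (a.effect s)) u) {s t : RegState}
    (h : exec X s = some t) (hs : P s) : P t := by
  induction X, s using exec.induct <;>
    simp only [exec, List.mem_cons, forall_eq_or_imp, reduceIte, Bool.false_eq_true, *] at h hX
  case case12 => exact Option.some_inj.1 h ▸ hs
  all_goals first
    | cases h
    | rename_i ih
      exact ih (fun u hu => hX.2 u (List.mem_of_mem_drop hu)) h (hX.1 _ hs)
    | rename_i ih
      exact ih (fun u hu => hX.2 u hu) h (hX.1 _ hs)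
    | rename_i ih
      exact ih (fun u hu => hX.2 u (List.mem_of_mem_drop hu)) h hs

lemma BrBasic.effect_inp {a : BInstr} (ha : BrBasic a) (s : RegState) (i : ℕ) :
    a.effect s (.inp i) = s (.inp i) := by
  cases a with
  | set r b =>
    cases r with
    | inp => exact ha.elim
    | _ => simp [BInstr.effect]
  | _ => rfl

lemma exec_inp_of_brBasic {X : List PInstr} (hX : ∀ u ∈ X, InstrBasicOK BrBasic u)
    {s t : RegState} (h : exec X s = some t) (i : ℕ) : t (.inp i) = s (.inp i) :=
  exec_invariant (P := fun s' => s' (.inp i) = s (.inp i))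
    (fun u hu => (hX u hu).mono fun _ ha s' hs' => (ha.effect_inp s' i).trans hs') h rfl

def execSeq (Xs : List (List PInstr)) (s : RegState) : Option RegState :=
  Xs.foldlM (fun s X => exec X s) s

lemma exec_flatten_haltsToJumps_append {Xs : List (List PInstr)} {s t : RegState}
    (h : execSeq Xs s = some t) (R : List PInstr) :
    exec ((Xs.map haltsToJumps).flatten ++ R) s = exec R t := by
  induction Xs generalizing s with
  | nil => exact congrArg (exec R) (Option.some_inj.1 h)
  | cons X Xs ih =>
    obtain ⟨s', hX, hXs⟩ := Option.bind_eq_some_iff.1 h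
    rw [List.map_cons, List.flatten_cons, List.append_assoc, exec_haltsToJumps_append hX]
    exact ih hXs

/-- Block `j` keeps its auxiliary registers in row `j + 1` of the table
`aux (Nat.pair row col)` and its result in column `0` of that row. -/
def blockReg (j : ℕ) : Reg → Reg
  | .inp i => .inp i
  | .aux i => .aux (Nat.pair (j + 1) (i + 1))
  | .out => .aux (Nat.pair (j + 1) 0)

/-- The final program reads its first `m` inputs from the result cells of the blocks; its other
(always `false`) inputs and its auxiliary registers live in row `0`. -/
def finalReg (m : ℕ) : Reg → Reg
  | .inp i => if i < m then .aux (Nat.pair (i + 1) 0) else .aux (Nat.pair 0 (2 * i))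
  | .aux i => .aux (Nat.pair 0 (2 * i + 1))
  | .out => .out

lemma blockReg_injective (j : ℕ) : (blockReg j).Injective := by
  intro r r' h
  cases r <;> cases r' <;> simp_all [blockReg, Nat.pair_eq_pair]

lemma finalReg_injective (m : ℕ) : (finalReg m).Injective := by
  intro r r' h
  cases r <;> cases r' <;> simp only [finalReg] at h <;> (try split_ifs at h) <;>
    simp_all [Nat.pair_eq_pair] <;> omega

lemma brBasic_rename_blockReg (j : ℕ) {a : BInstr} (ha : BrBasic a) :
    BrBasic (a.rename (blockReg j)) :=
  BrBasic.rename (fun r hr => by cases r <;> trivial)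
    (fun r _ hr => by cases r <;> trivial) ha

lemma brBasic_rename_finalReg (m : ℕ) {a : BInstr} (ha : BrBasic a) :
    BrBasic (a.rename (finalReg m)) :=
  BrBasic.rename (fun r hr => by cases r <;> simp only [finalReg] <;> (try split_ifs) <;> trivial)
    (fun r _ hr => by cases r <;> trivial) ha

section Reduction

variable {n m : ℕ} {X : Fin m → List PInstr} {Y : List PInstr}

def reductionBlocks (X : Fin m → List PInstr) : List (List PInstr) :=
  List.ofFn fun j => (X j).map (PInstr.rename (blockReg j))

def reductionProgram (X : Fin m → List PInstr) (Y : List PInstr) : List PInstr :=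
  ((reductionBlocks X).map haltsToJumps).flatten ++ Y.map (PInstr.rename (finalReg m))

lemma isbr_reductionProgram (hX : ∀ j, ISbr (X j)) (hY : ISbr Y) :
    ISbr (reductionProgram X Y) := by
  refine ⟨by simp [reductionProgram, hY.1], fun u hu => ?_⟩
  simp only [reductionProgram, reductionBlocks, List.mem_append, List.mem_flatten, List.mem_map,
    List.mem_ofFn] at hu
  rcases hu with ⟨_, ⟨_, ⟨j, rfl⟩, rfl⟩, hu⟩ | ⟨v, hv, rfl⟩
  · refine instrBasicOK_of_mem_haltsToJumps (fun u hu => ?_) u hu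
    obtain ⟨v, hv, rfl⟩ := List.mem_map.1 hu
    exact PInstr.instrBasicOK_rename (P := BrBasic) (fun _ => brBasic_rename_blockReg j)
      ((hX j).2 v hv)
  · exact PInstr.instrBasicOK_rename (P := BrBasic) (fun _ => brBasic_rename_finalReg m)
      (hY.2 v hv)

lemma length_reductionProgram_le {l : ℕ} (hX : ∀ j, (X j).length ≤ l) :
    (reductionProgram X Y).length ≤ m * l + Y.length := by
  have hblocks : ((reductionBlocks X).map haltsToJumps).flatten.length ≤ m * l := by
    simp only [reductionBlocks, List.length_flatten, List.map_ofFn, List.sum_ofFn]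
    calc ∑ j : Fin m, _ ≤ ∑ _j : Fin m, l := Finset.sum_le_sum fun j _ => by simpa using hX j
      _ = m * l := by simp
  simpa [reductionProgram] using hblocks

def AfterBlocks (h : Fin m → (Fin n → Bool) → Bool) (b : Fin n → Bool) (j : ℕ) (s : RegState) :
    Prop :=
  (∀ r, (∀ k < j, ∀ x, r ≠ .aux (Nat.pair (k + 1) x)) → s r = initState n b r) ∧
  ∀ k : Fin m, (k : ℕ) < j → s (.aux (Nat.pair (k + 1) 0)) = h k b

variable {h : Fin m → (Fin n → Bool) → Bool} {b : Fin n → Bool} {s : RegState}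

lemma AfterBlocks.comp_blockReg {j : ℕ} (hs : AfterBlocks h b j s) :
    s ∘ blockReg j = initState n b := by
  funext r
  cases r with
  | inp i => exact hs.1 _ (by simp [blockReg])
  | _ => exact hs.1 _ (fun k hk x => by simp [blockReg, Nat.pair_eq_pair]; omega)

lemma AfterBlocks.exec_block {j : Fin m} (hXj : ISbr (X j)) (hc : Computes (h j) (X j))
    (hs : AfterBlocks h b j s) :
    ∃ s', exec ((X j).map (PInstr.rename (blockReg j))) s = some s' ∧
      AfterBlocks h b (j + 1) s' := by
  obtain ⟨t, ht, hto⟩ := hc b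
  have hexec := exec_map_rename (blockReg_injective j) (X j) s
  rw [hs.comp_blockReg, ht, Option.map_some] at hexec
  refine ⟨_, hexec, fun r hr => ?_, fun k hk => ?_⟩
  · by_cases hrange : ∃ r', blockReg j r' = r
    · obtain ⟨r', rfl⟩ := hrange
      rw [(blockReg_injective j).extend_apply]
      cases r' with
      | inp i => exact exec_inp_of_brBasic hXj.2 ht i
      | aux i => exact absurd rfl (hr j (by omega) (i + 1))
      | out => exact absurd rfl (hr j (by omega) 0)
    · rw [Function.extend_apply' _ _ _ hrange]
      exact hs.1 r fun k hk => hr k (by omega)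
  · by_cases hkj : (k : ℕ) = j
    · have hout : Reg.aux (Nat.pair (k + 1) 0) = blockReg j .out := by simp [blockReg, hkj]
      rw [hout, (blockReg_injective j).extend_apply, hto, Fin.ext hkj]
    · rw [Function.extend_apply', hs.2 k (by omega)]
      rintro ⟨r', hr'⟩
      cases r' <;> simp [blockReg, Nat.pair_eq_pair] at hr'
      all_goals omega

lemma execSeq_take_reductionBlocks (hX : ∀ j, ISbr (X j)) (hc : ∀ j, Computes (h j) (X j))
    (b : Fin n → Bool) :
    ∀ j ≤ m, ∃ s, execSeq ((reductionBlocks X).take j) (initState n b) = some s ∧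
      AfterBlocks h b j s := by
  intro j hj
  induction j with
  | zero => exact ⟨_, rfl, fun _ _ => rfl, fun _ hk => absurd hk (Nat.not_lt_zero _)⟩
  | succ j ih =>
    obtain ⟨s, hs, hinv⟩ := ih (by omega)
    obtain ⟨s', hs', hinv'⟩ := hinv.exec_block (j := ⟨j, hj⟩) (hX _) (hc _)
    refine ⟨s', ?_, hinv'⟩
    simp only [execSeq, reductionBlocks] at hs ⊢
    rw [List.take_add_one, List.foldlM_append, hs]
    simpa [Nat.lt_of_succ_le hj] using hs'

lemma AfterBlocks.comp_finalReg (hs : AfterBlocks h b m s) :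
    s ∘ finalReg m = initState m fun k => h k b := by
  funext r
  cases r with
  | inp i =>
    by_cases hi : i < m
    · simpa [finalReg, initState, hi] using hs.2 ⟨i, hi⟩ hi
    · simpa [finalReg, initState, hi] using hs.1 _ (by simp [Nat.pair_eq_pair])
  | _ => exact hs.1 _ (by simp [finalReg, Nat.pair_eq_pair])

theorem computes_reductionProgram {g : (Fin m → Bool) → Bool} (hX : ∀ j, ISbr (X j))
    (hc : ∀ j, Computes (h j) (X j)) (hY : Computes g Y) :
    Computes (fun b => g fun j => h j b) (reductionProgram X Y) := by
  intro b
  obtain ⟨s, hs, hinv⟩ := execSeq_take_reductionBlocks hX hc b m le_rfl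
  rw [List.take_of_length_le (by simp [reductionBlocks])] at hs
  obtain ⟨t, ht, hto⟩ := hY fun j => h j b
  refine ⟨Function.extend (finalReg m) t s, ?_, ?_⟩
  · rw [reductionProgram, exec_flatten_haltsToJumps_append hs,
      exec_map_rename (finalReg_injective m), hinv.comp_finalReg, ht, Option.map_some]
  · exact ((finalReg_injective m).extend_apply t s .out).trans hto

end Reduction

theorem LengthRed.exists_isbr_computes {l n m : ℕ} {f : (Fin n → Bool) → Bool}
    {g : (Fin m → Bool) → Bool} (hfg : LengthRed l f g) {Y : List PInstr} (hY : ISbr Y)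
    (hYg : Computes g Y) : ∃ X, ISbr X ∧ Computes f X ∧ X.length ≤ m * l + Y.length := by
  obtain ⟨h, hh, hf⟩ := hfg
  choose X hX hXc hXl using hh
  obtain rfl : f = fun b => g fun j => h j b := funext hf
  exact ⟨reductionProgram X Y, isbr_reductionProgram hX hY, computes_reductionProgram hX hXc hYg,
    length_reductionProgram_le hXl⟩

lemma Polynomial.eval_mono {R : Type*} [CommSemiring R] [PartialOrder R] [CanonicallyOrderedAdd R]
    [IsOrderedRing R] (p : Polynomial R) : Monotone fun x => p.eval x := by
  intro a b hab
  simp only [Polynomial.eval_eq_sum_range]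
  gcongr

/-- Proposition 1.1 of the paper: PLIS is closed under non-uniform
polynomial-length reducibility. -/
theorem statement8 (F G : (n : ℕ) → (Fin n → Bool) → Bool)
    (hred : PLRed F G) (hG : PLIS G) : PLIS F := by
  obtain ⟨q, hq⟩ := hred
  obtain ⟨p, hp⟩ := hG
  refine ⟨q * q + p.comp q, fun n => ?_⟩
  obtain ⟨l, m, hl, hm, hred⟩ := hq n
  obtain ⟨Y, hY, hYg, hYlen⟩ := hp m
  obtain ⟨X, hX, hXf, hXlen⟩ := hred.exists_isbr_computes hY hYg
  refine ⟨X, hX, hXf, hXlen.trans ?_⟩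
  rw [Polynomial.eval_add, Polynomial.eval_mul, Polynomial.eval_comp]
  gcongr
  exact hYlen.trans (p.eval_mono hm)
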